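/- arXiv:2303.07941 — 2 statements merged into one kernel-verified Lean document; each statement's English description precedes it below -/
import Mathlib

section
/- Suppose that for every i ∈ {1,…,N}, U_i : (0,∞) → ℝ is an increasing, strictly concave, twice continuously differentiable utility function satisfying the Inada conditions U_i'(0+) = ∞ and U_i'(∞) = 0, that there exists ε_i > 0 such that RRA[U_i](x) ≥ ε_i + μ_i/(1+μ_i) for all x > 0, and in addition that for some i ∈ {1,…,N} either λ_i < 1, or there exists R_i ∈ (0,∞) with RRA[U_i](x) ≤ R_i for all x > 0. Then the inverse map G^{-1} : ℝ^N → ℝ^N exists, is continuously differentiable, and is globally Lipschitz. -/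
/-- Relative risk aversion of a utility function `U` at `x`: `RRA[U](x) = -x·U''(x)/U'(x)`. -/
noncomputable def RRA (U : ℝ → ℝ) (x : ℝ) : ℝ := -x * deriv (deriv U) x / deriv U x

/-- `V(y) = ln U'(e^y)`. -/
noncomputable def Vfun (U : ℝ → ℝ) (y : ℝ) : ℝ := Real.log (deriv U (Real.exp y))

/-- The map `G : ℝ^N → ℝ^N`,
`G^i(y) = V_i(y^i − μ_i·Σ_{j≠i} y^j) − μ_i·Σ_{j≠i} y^j`. -/
noncomputable def Gmap {N : ℕ} (U : Fin N → ℝ → ℝ) (μ : Fin N → ℝ)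
    (y : Fin N → ℝ) : Fin N → ℝ :=
  fun i => Vfun (U i) (y i - μ i * ∑ j ∈ Finset.univ.erase i, y j)
    - μ i * ∑ j ∈ Finset.univ.erase i, y j

/-!
Write `S = ∑ j, y j`. Then `G^i(y) + μ_i S = V_i((1 + μ_i) y^i - μ_i S) + μ_i y^i`, and
`V_i'(w) = -RRA[U_i](e^w) ≤ -(μ_i/(1+μ_i) + ε)`. By the mean value theorem in each coordinate,
an increment `Δ` of `y` and the increment `r` of `G(y)` satisfy
`r_i = D_i Δ_i - μ_i (1 + a_i) ∑ Δ` with `D_i = (1 + μ_i) a_i + μ_i ≤ -ε` for some values `a_i`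
of `V_i'`. Solving, `Δ_i = c_i ∑ Δ + r_i / D_i` with `c_i ≤ μ_i/(1+μ_i) ≤ 1/N`, and the extra
hypothesis at one agent (`λ_i < 1`, or bounded `RRA[U_i]`) keeps that `c_i` uniformly below
`1/N`. Hence `∑ c_i ≤ 1 - δ`, which bounds `∑ Δ` and then every `Δ_i` linearly in `r`: `G` is
antilipschitz. The same estimate for the derivative makes it invertible everywhere, so `G` is an
open map with closed range, i.e. a homeomorphism of `ℝ^N`, whose inverse is `C¹` by the inverse
function theorem and Lipschitz by the antilipschitz bound.
-/

open Finset Set Real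
open scoped NNReal

lemma exists_sub_eq_deriv_mul {f : ℝ → ℝ} (hf : Differentiable ℝ f) (x y : ℝ) :
    ∃ ξ, f y - f x = deriv f ξ * (y - x) := by
  obtain ⟨ξ, -, hξ⟩ := domain_mvt (fun z _ => (hf z).hasFDerivAt.hasFDerivWithinAt)
    convex_univ (mem_univ x) (mem_univ y)
  exact ⟨ξ, by rw [hξ, fderiv_eq_smul_deriv, smul_eq_mul, mul_comm]⟩

theorem AntilipschitzWith.surjective_of_isOpenMap {α β : Type*} [MetricSpace α] [ProperSpace α]
    [Nonempty α] [MetricSpace β] [ProperSpace β] [PreconnectedSpace β] {K : ℝ≥0} {f : α → β}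
    (hf : AntilipschitzWith K f) (hcont : Continuous f) (hopen : IsOpenMap f) :
    Function.Surjective f := by
  have hproper : IsProperMap f := isProperMap_iff_tendsto_cocompact.2
    ⟨hcont, by simpa only [Metric.cobounded_eq_cocompact] using hf.tendsto_cobounded⟩
  exact range_eq_univ.1 <|
    IsClopen.eq_univ ⟨hproper.isClosed_range, hopen.isOpen_range⟩ (range_nonempty f)

noncomputable def aggregateCoeff (μ a : ℝ) : ℝ := μ * (1 + a) / ((1 + μ) * a + μ)

section AggregateCoeff

variable {μ ε a : ℝ}

lemma eq_aggregateCoeff_mul_add (ha : (1 + μ) * a + μ ≠ 0) (u S : ℝ) :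
    u = aggregateCoeff μ a * S
      + ((1 + μ) * a + μ)⁻¹ * (a * ((1 + μ) * u - μ * S) - μ * (S - u)) := by
  rw [aggregateCoeff, div_eq_mul_inv]
  calc u = ((1 + μ) * a + μ)⁻¹ * (((1 + μ) * a + μ) * u) := (inv_mul_cancel_left₀ ha u).symm
    _ = _ := by ring

lemma aggregateCoeff_eq (hμ : 1 + μ ≠ 0) (ha : (1 + μ) * a + μ ≠ 0) :
    aggregateCoeff μ a = μ / (1 + μ) * (1 + ((1 + μ) * a + μ)⁻¹) := by
  rw [aggregateCoeff, div_eq_mul_inv, div_eq_mul_inv]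
  linear_combination (-μ * (1 + a) * ((1 + μ) * a + μ)⁻¹) * mul_inv_cancel₀ hμ
    + (μ * (1 + μ)⁻¹) * mul_inv_cancel₀ ha

variable (hμ : 0 ≤ μ) (hε : 0 < ε) (ha : a ≤ -(μ / (1 + μ) + ε))
include hμ hε ha

lemma slope_denom_le : (1 + μ) * a + μ ≤ -ε := by
  have h : (1 + μ) * a ≤ -μ - (1 + μ) * ε := by
    calc (1 + μ) * a ≤ (1 + μ) * -(μ / (1 + μ) + ε) := by gcongr
      _ = -μ - (1 + μ) * ε := by field_simp; ring
  nlinarith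

lemma slope_denom_neg : (1 + μ) * a + μ < 0 :=
  (slope_denom_le hμ hε ha).trans_lt (neg_neg_of_pos hε)

lemma abs_inv_slope_denom_le : |((1 + μ) * a + μ)⁻¹| ≤ ε⁻¹ := by
  have h := slope_denom_le hμ hε ha
  rw [abs_inv, abs_of_neg (by linarith)]
  exact inv_anti₀ hε (by linarith)

lemma aggregateCoeff_le : aggregateCoeff μ a ≤ μ / (1 + μ) := by
  have h := slope_denom_neg hμ hε ha
  rw [aggregateCoeff_eq (by positivity) h.ne]
  exact mul_le_of_le_one_right (by positivity) (by linarith [inv_lt_zero.2 h])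

lemma abs_aggregateCoeff_le : |aggregateCoeff μ a| ≤ 1 + ε⁻¹ := by
  rw [aggregateCoeff_eq (by positivity) (slope_denom_neg hμ hε ha).ne, abs_mul,
    abs_of_nonneg (by positivity : 0 ≤ μ / (1 + μ))]
  have hk : μ / (1 + μ) ≤ 1 := (div_le_one (by positivity)).2 (by linarith)
  calc μ / (1 + μ) * |1 + ((1 + μ) * a + μ)⁻¹| ≤ 1 * (1 + ε⁻¹) := by
        gcongr
        refine (abs_add_le _ _).trans ?_
        rw [abs_one]
        gcongr
        exact abs_inv_slope_denom_le hμ hε ha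
    _ = 1 + ε⁻¹ := one_mul _

lemma aggregateCoeff_le_of_neg_le {R : ℝ} (hR : 0 < R) (haR : -R ≤ a) :
    aggregateCoeff μ a ≤ μ / (1 + μ) * (1 - ((1 + μ) * R)⁻¹) := by
  have h := slope_denom_neg hμ hε ha
  have hinv : ((1 + μ) * a + μ)⁻¹ ≤ -((1 + μ) * R)⁻¹ := by
    rw [← inv_neg]
    exact (inv_le_inv_of_neg h (by nlinarith)).2 (by nlinarith)
  rw [aggregateCoeff_eq (by positivity) h.ne, sub_eq_add_neg]
  gcongr

end AggregateCoeff

theorem abs_le_of_forall_eq_mul_sum_add {ι : Type*} [Fintype ι] {c d u r : ι → ℝ}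
    {δ C D : ℝ} (hδ : 0 < δ) (hc : ∑ i, c i ≤ 1 - δ) (hC : ∀ i, |c i| ≤ C)
    (hD : ∀ i, |d i| ≤ D) (hu : ∀ i, u i = c i * ∑ j, u j + d i * r i) (i : ι) :
    |u i| ≤ (C * (Fintype.card ι * D) / δ + D) * ‖r‖ := by
  set S := ∑ j, u j
  have hdr : ∀ j, |d j * r j| ≤ D * ‖r‖ := fun j => by
    rw [abs_mul]
    exact mul_le_mul (hD j) (norm_le_pi_norm r j) (abs_nonneg _) ((abs_nonneg _).trans (hD j))
  have hS : (1 - ∑ j, c j) * S = ∑ j, d j * r j := by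
    have h : S = ∑ j, (c j * S + d j * r j) := sum_congr rfl fun j _ => hu j
    rw [sum_add_distrib, ← sum_mul] at h
    linarith
  have hSle : |S| ≤ Fintype.card ι * (D * ‖r‖) / δ := by
    rw [le_div_iff₀ hδ]
    calc |S| * δ ≤ |S| * (1 - ∑ j, c j) := by gcongr; linarith
      _ = |∑ j, d j * r j| := by
          rw [← hS, abs_mul, abs_of_pos (show 0 < 1 - ∑ j, c j by linarith), mul_comm]
      _ ≤ ∑ j, |d j * r j| := abs_sum_le_sum_abs _ _
      _ ≤ ∑ _j : ι, D * ‖r‖ := sum_le_sum fun j _ => hdr j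
      _ = Fintype.card ι * (D * ‖r‖) := by rw [sum_const, card_univ, nsmul_eq_mul]
  have hC0 : 0 ≤ C := (abs_nonneg _).trans (hC i)
  calc |u i| ≤ |c i| * |S| + |d i * r i| := by
        rw [hu i, ← abs_mul]; exact abs_add_le _ _
    _ ≤ C * (Fintype.card ι * (D * ‖r‖) / δ) + D * ‖r‖ := by
        gcongr
        · exact hC i
        · exact hdr i
    _ = (C * (Fintype.card ι * D) / δ + D) * ‖r‖ := by ring

section CoupledMap

variable {ι : Type*} [Fintype ι] {V : ι → ℝ → ℝ} {μ : ι → ℝ}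

noncomputable def coupledMap (V : ι → ℝ → ℝ) (μ y : ι → ℝ) : ι → ℝ :=
  fun i => V i ((1 + μ i) * y i - μ i * ∑ j, y j) - μ i * (∑ j, y j - y i)

noncomputable def coupledCLM (μ a : ι → ℝ) : (ι → ℝ) →L[ℝ] (ι → ℝ) :=
  LinearMap.toContinuousLinearMap
    { toFun := coupledMap (fun i t => a i * t) μ
      map_add' := fun u v => by
        ext i
        simp only [coupledMap, Pi.add_apply, sum_add_distrib]
        ring
      map_smul' := fun c u => by
        ext i
        simp only [coupledMap, Pi.smul_apply, smul_eq_mul, ← mul_sum, RingHom.id_apply]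
        ring }

lemma coe_coupledCLM (a : ι → ℝ) : ⇑(coupledCLM μ a) = coupledMap (fun i t => a i * t) μ := rfl

theorem exists_norm_le_mul_norm_coupledMap {ε δ : ℝ} (hμ : ∀ i, 0 ≤ μ i) (hε : 0 < ε)
    (hδ : 0 < δ) : ∃ K : ℝ≥0, ∀ a : ι → ℝ, (∀ i, a i ≤ -(μ i / (1 + μ i) + ε)) →
      ∑ i, aggregateCoeff (μ i) (a i) ≤ 1 - δ →
      ∀ u, ‖u‖ ≤ K * ‖coupledMap (fun i t => a i * t) μ u‖ := by
  refine ⟨⟨(1 + ε⁻¹) * (Fintype.card ι * ε⁻¹) / δ + ε⁻¹, by positivity⟩, fun a ha hc u => ?_⟩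
  refine (pi_norm_le_iff_of_nonneg (mul_nonneg (NNReal.coe_nonneg _) (norm_nonneg _))).2 fun i => ?_
  rw [Real.norm_eq_abs]
  refine abs_le_of_forall_eq_mul_sum_add hδ hc
    (fun i => abs_aggregateCoeff_le (hμ i) hε (ha i))
    (fun i => abs_inv_slope_denom_le (hμ i) hε (ha i)) (fun i => ?_) i
  exact eq_aggregateCoeff_mul_add (slope_denom_neg (hμ i) hε (ha i)).ne _ _

lemma exists_coupledMap_sub_eq (hV : ∀ i, Differentiable ℝ (V i)) (y y' : ι → ℝ) :
    ∃ w : ι → ℝ, coupledMap V μ y' - coupledMap V μ y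
      = coupledMap (fun i t => deriv (V i) (w i) * t) μ (y' - y) := by
  choose w hw using fun i => exists_sub_eq_deriv_mul (hV i)
    ((1 + μ i) * y i - μ i * ∑ j, y j) ((1 + μ i) * y' i - μ i * ∑ j, y' j)
  refine ⟨w, funext fun i => ?_⟩
  simp only [coupledMap, Pi.sub_apply, sum_sub_distrib]
  linear_combination hw i

lemma hasFDerivAt_coupledMap (hV : ∀ i, Differentiable ℝ (V i)) (y : ι → ℝ) :
    HasFDerivAt (coupledMap V μ)
      (coupledCLM μ fun i => deriv (V i) ((1 + μ i) * y i - μ i * ∑ j, y j)) y := by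
  refine hasFDerivAt_pi'' fun i => ?_
  have hsum : HasFDerivAt (fun y : ι → ℝ => ∑ j, y j) (∑ j, ContinuousLinearMap.proj j) y :=
    HasFDerivAt.fun_sum (u := univ) fun j _ =>
      hasFDerivAt_apply (𝕜 := ℝ) (F' := fun _ : ι => ℝ) j y
  have hi := hasFDerivAt_apply (𝕜 := ℝ) i y
  have h := ((hV i _).hasDerivAt.comp_hasFDerivAt y
    ((hi.const_mul (1 + μ i)).sub (hsum.const_mul (μ i)))).sub ((hsum.sub hi).const_mul (μ i))
  refine h.congr_fderiv ?_
  ext u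
  simp [coe_coupledCLM, coupledMap]

lemma contDiff_coupledMap (hV : ∀ i, ContDiff ℝ 1 (V i)) : ContDiff ℝ 1 (coupledMap V μ) :=
  contDiff_pi.2 fun i => ((hV i).comp (by fun_prop)).sub (by fun_prop)

theorem exists_inverse_coupledMap {ε δ : ℝ} (hV : ∀ i, ContDiff ℝ 1 (V i)) (hμ : ∀ i, 0 ≤ μ i)
    (hε : 0 < ε) (hδ : 0 < δ) (hslope : ∀ i w, deriv (V i) w ≤ -(μ i / (1 + μ i) + ε))
    (hsum : ∀ w : ι → ℝ, ∑ i, aggregateCoeff (μ i) (deriv (V i) (w i)) ≤ 1 - δ) :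
    ∃ Ginv : (ι → ℝ) → (ι → ℝ),
      Function.LeftInverse Ginv (coupledMap V μ) ∧ Function.RightInverse Ginv (coupledMap V μ) ∧
      ContDiff ℝ 1 Ginv ∧ ∃ K : ℝ≥0, LipschitzWith K Ginv := by
  have hdiff : ∀ i, Differentiable ℝ (V i) := fun i => (hV i).differentiable one_ne_zero
  have hG : ContDiff ℝ 1 (coupledMap V μ) := contDiff_coupledMap hV
  obtain ⟨K, hK⟩ := exists_norm_le_mul_norm_coupledMap hμ hε hδ
  have hanti : AntilipschitzWith K (coupledMap V μ) := .of_le_mul_dist fun y' y => by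
    obtain ⟨w, hw⟩ := exists_coupledMap_sub_eq hdiff y y'
    rw [dist_eq_norm, dist_eq_norm, hw]
    exact hK _ (fun i => hslope i (w i)) (hsum w) _
  have hderiv : ∀ y, ∃ e : (ι → ℝ) ≃L[ℝ] (ι → ℝ),
      HasFDerivAt (coupledMap V μ) (e : (ι → ℝ) →L[ℝ] (ι → ℝ)) y := by
    intro y
    set w := fun i => (1 + μ i) * y i - μ i * ∑ j, y j
    set L := coupledCLM μ fun i => deriv (V i) (w i)
    have hinj : Function.Injective L := by
      refine (injective_iff_map_eq_zero L).2 fun u hu => norm_le_zero_iff.1 ?_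
      have h := hK _ (fun i => hslope i (w i)) (hsum w) u
      rwa [← coe_coupledCLM, hu, norm_zero, mul_zero] at h
    exact ⟨(LinearEquiv.ofInjectiveEndo (L : (ι → ℝ) →ₗ[ℝ] (ι → ℝ)) hinj).toContinuousLinearEquiv,
      hasFDerivAt_coupledMap hdiff y⟩
  choose e he using hderiv
  have hopen : IsOpenMap (coupledMap V μ) :=
    isOpenMap_of_hasStrictFDerivAt_equiv fun y =>
      hG.contDiffAt.hasStrictFDerivAt' (he y) one_ne_zero
  let Φ := (hanti.isEmbedding hG.continuous).toHomeomorphOfSurjective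
    (hanti.surjective_of_isOpenMap hG.continuous hopen)
  exact ⟨Φ.symm, Φ.symm_apply_apply, Φ.apply_symm_apply, Φ.contDiff_symm he hG, K,
    hanti.to_rightInverse Φ.apply_symm_apply⟩

end CoupledMap

lemma sum_le_card_mul_sub {ι : Type*} [Fintype ι] [DecidableEq ι] {f : ι → ℝ} {b δ : ℝ} {i₀ : ι}
    (hf : ∀ i, f i ≤ b) (hi₀ : f i₀ ≤ b - δ) : ∑ i, f i ≤ Fintype.card ι * b - δ := by
  calc ∑ i, f i ≤ ∑ i, (b - if i = i₀ then δ else 0) := sum_le_sum fun i _ => by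
        split_ifs with h
        · exact h ▸ hi₀
        · simpa using hf i
    _ = Fintype.card ι * b - δ := by simp [sum_sub_distrib]

theorem exists_pos_forall_sum_aggregateCoeff_le {ι : Type*} [Fintype ι] {μ : ι → ℝ} {ε : ℝ}
    {a : ι → ℝ → ℝ} (hμ : ∀ i, 0 ≤ μ i) (hk : ∀ i, μ i / (1 + μ i) ≤ (Fintype.card ι : ℝ)⁻¹)
    (hε : 0 < ε) (ha : ∀ i w, a i w ≤ -(μ i / (1 + μ i) + ε))
    (hspecial : ∃ i, μ i / (1 + μ i) < (Fintype.card ι : ℝ)⁻¹ ∨ ∃ R : ℝ, 0 < R ∧ ∀ w, -R ≤ a i w) :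
    ∃ δ > 0, ∀ w : ι → ℝ, ∑ i, aggregateCoeff (μ i) (a i (w i)) ≤ 1 - δ := by
  classical
  obtain ⟨i₀, hi₀⟩ := hspecial
  have hcard : 0 < (Fintype.card ι : ℝ) := by exact_mod_cast Fintype.card_pos_iff.2 ⟨i₀⟩
  obtain ⟨κ, hκ, hκa⟩ : ∃ κ < (Fintype.card ι : ℝ)⁻¹, ∀ w, aggregateCoeff (μ i₀) (a i₀ w) ≤ κ := by
    rcases hi₀ with hlt | ⟨R, hR, haR⟩
    · exact ⟨_, hlt, fun w => aggregateCoeff_le (hμ i₀) hε (ha i₀ w)⟩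
    refine ⟨_, ?_, fun w => aggregateCoeff_le_of_neg_le (hμ i₀) hε (ha i₀ w) hR (haR w)⟩
    have hβ : 0 < ((1 + μ i₀) * R)⁻¹ := by have := hμ i₀; positivity
    rcases (div_nonneg (hμ i₀) (by linarith [hμ i₀]) : 0 ≤ μ i₀ / (1 + μ i₀)).eq_or_lt with h | h
    · rw [← h, zero_mul]; positivity
    · linarith [mul_pos h hβ, hk i₀]
  refine ⟨(Fintype.card ι : ℝ)⁻¹ - κ, sub_pos.2 hκ, fun w => ?_⟩
  calc ∑ i, aggregateCoeff (μ i) (a i (w i))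
      ≤ Fintype.card ι * (Fintype.card ι : ℝ)⁻¹ - ((Fintype.card ι : ℝ)⁻¹ - κ) :=
        sum_le_card_mul_sub (i₀ := i₀)
          (fun i => (aggregateCoeff_le (hμ i) hε (ha i _)).trans (hk i)) (by linarith [hκa (w i₀)])
    _ = 1 - ((Fintype.card ι : ℝ)⁻¹ - κ) := by rw [mul_inv_cancel₀ hcard.ne']

lemma div_one_add_le_inv {μ n : ℝ} (hμ : 0 ≤ μ) (hn : 0 < n) (h : μ * (n - 1) ≤ 1) :
    μ / (1 + μ) ≤ n⁻¹ := by
  rw [div_le_iff₀ (by positivity), inv_mul_eq_div, le_div_iff₀ hn]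
  linarith

lemma div_one_add_lt_inv {μ n : ℝ} (hμ : 0 ≤ μ) (hn : 0 < n) (h : μ * (n - 1) < 1) :
    μ / (1 + μ) < n⁻¹ := by
  rw [div_lt_iff₀ (by positivity), inv_mul_eq_div, lt_div_iff₀ hn]
  linarith

lemma Gmap_eq_coupledMap {N : ℕ} (U : Fin N → ℝ → ℝ) (μ : Fin N → ℝ) :
    Gmap U μ = coupledMap (fun i => Vfun (U i)) μ := by
  ext y i
  simp only [Gmap, coupledMap, sum_erase_eq_sub (mem_univ i)]
  ring_nf

section Vfun

variable {U : ℝ → ℝ}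

-- `RRA U x` is the junk value `0` wherever `deriv U x = 0`.
lemma deriv_ne_zero_of_le_RRA {c : ℝ} (hc : 0 < c) (hU : ∀ x > 0, c ≤ RRA U x) {x : ℝ}
    (hx : 0 < x) : deriv U x ≠ 0 := by
  intro h
  have := hU x hx
  rw [RRA, h, div_zero] at this
  linarith

variable (hU : ContDiffOn ℝ 2 U (Ioi 0)) (hU' : ∀ x > 0, deriv U x ≠ 0)
include hU hU'

lemma hasDerivAt_Vfun (w : ℝ) : HasDerivAt (Vfun U) (-RRA U (exp w)) w := by
  have h2 : HasDerivAt (deriv U) (deriv (deriv U) (exp w)) (exp w) :=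
    (((hU.deriv_of_isOpen (m := 1) isOpen_Ioi (by norm_num)).contDiffAt
      (isOpen_Ioi.mem_nhds (exp_pos w))).differentiableAt one_ne_zero).hasDerivAt
  refine ((hasDerivAt_log (hU' _ (exp_pos w))).comp w (h2.comp w (hasDerivAt_exp w))).congr_deriv ?_
  rw [RRA]
  ring

lemma contDiff_Vfun : ContDiff ℝ 1 (Vfun U) := by
  refine contDiff_iff_contDiffAt.2 fun w => ?_
  have h1 : ContDiffAt ℝ 1 (deriv U) (exp w) :=
    (hU.deriv_of_isOpen isOpen_Ioi (by norm_num)).contDiffAt (isOpen_Ioi.mem_nhds (exp_pos w))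
  exact (contDiffAt_log.2 (hU' _ (exp_pos w))).comp w (h1.comp w contDiff_exp.contDiffAt)

end Vfun

theorem stmt3_general (N : ℕ) (hN : 2 ≤ N) (U : Fin N → ℝ → ℝ) (lam μ eps : Fin N → ℝ)
    (hlam : ∀ i, lam i ∈ Set.Icc (0:ℝ) 1)
    (hμ : ∀ i, μ i = lam i / ((N : ℝ) - 1))
    (hsmooth : ∀ i, ContDiffOn ℝ 2 (U i) (Set.Ioi 0))
    (heps : ∀ i, 0 < eps i)
    (hRRA : ∀ i, ∀ x > 0, eps i + μ i / (1 + μ i) ≤ RRA (U i) x)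
    (hspecial : ∃ i, lam i < 1 ∨ ∃ R : ℝ, 0 < R ∧ ∀ x > 0, RRA (U i) x ≤ R) :
    ∃ Ginv : (Fin N → ℝ) → (Fin N → ℝ),
      Function.LeftInverse Ginv (Gmap U μ) ∧ Function.RightInverse Ginv (Gmap U μ) ∧
      ContDiff ℝ 1 Ginv ∧ ∃ K : NNReal, LipschitzWith K Ginv := by
  have hN' : (1 : ℝ) < N := by exact_mod_cast hN
  have hμ0 : ∀ i, 0 ≤ μ i := fun i => hμ i ▸ div_nonneg (hlam i).1 (by linarith)
  have hμlam : ∀ i, μ i * (N - 1) = lam i := fun i => by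
    rw [hμ i, div_mul_cancel₀ _ (by linarith)]
  have : Nonempty (Fin N) := ⟨⟨0, by omega⟩⟩
  obtain ⟨i₁, hi₁⟩ := Finite.exists_min eps
  have hU' : ∀ i, ∀ x > 0, deriv (U i) x ≠ 0 := fun i _ hx => deriv_ne_zero_of_le_RRA
    (add_pos_of_pos_of_nonneg (heps i) (div_nonneg (hμ0 i) (by linarith [hμ0 i]))) (hRRA i) hx
  have hV' : ∀ i w, deriv (Vfun (U i)) w = -RRA (U i) (exp w) := fun i w =>
    (hasDerivAt_Vfun (hsmooth i) (hU' i) w).deriv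
  have hslope : ∀ i w, deriv (Vfun (U i)) w ≤ -(μ i / (1 + μ i) + eps i₁) := fun i w => by
    linarith [hV' i w, hRRA i _ (exp_pos w), hi₁ i]
  obtain ⟨δ, hδ, hsum⟩ := exists_pos_forall_sum_aggregateCoeff_le hμ0 (fun i => by
      rw [Fintype.card_fin]
      exact div_one_add_le_inv (hμ0 i) (by linarith) ((hμlam i).trans_le (hlam i).2))
    (heps i₁) hslope <| by
      obtain ⟨i, hi⟩ := hspecial
      refine ⟨i, hi.imp (fun hlt => ?_) fun ⟨R, hR, hRb⟩ => ⟨R, hR, fun w => ?_⟩⟩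
      · rw [Fintype.card_fin]
        exact div_one_add_lt_inv (hμ0 i) (by linarith) ((hμlam i).trans_lt hlt)
      · linarith [hV' i w, hRb _ (exp_pos w)]
  rw [Gmap_eq_coupledMap]
  exact exists_inverse_coupledMap (fun i => contDiff_Vfun (hsmooth i) (hU' i)) hμ0 (heps i₁) hδ
    hslope hsum

theorem stmt3 (N : ℕ) (hN : 2 ≤ N) (U : Fin N → ℝ → ℝ) (lam μ eps : Fin N → ℝ)
    (hlam : ∀ i, lam i ∈ Set.Icc (0:ℝ) 1)
    (hμ : ∀ i, μ i = lam i / ((N : ℝ) - 1))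
    (hmono : ∀ i, StrictMonoOn (U i) (Set.Ioi 0))
    (hconc : ∀ i, StrictConcaveOn ℝ (Set.Ioi 0) (U i))
    (hsmooth : ∀ i, ContDiffOn ℝ 2 (U i) (Set.Ioi 0))
    (hinada0 : ∀ i, Filter.Tendsto (deriv (U i)) (nhdsWithin 0 (Set.Ioi 0)) Filter.atTop)
    (hinadaInf : ∀ i, Filter.Tendsto (deriv (U i)) Filter.atTop (nhds 0))
    (heps : ∀ i, 0 < eps i)
    (hRRA : ∀ i, ∀ x > 0, eps i + μ i / (1 + μ i) ≤ RRA (U i) x)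
    (hspecial : ∃ i, lam i < 1 ∨ ∃ R : ℝ, 0 < R ∧ ∀ x > 0, RRA (U i) x ≤ R) :
    ∃ Ginv : (Fin N → ℝ) → (Fin N → ℝ),
      Function.LeftInverse Ginv (Gmap U μ) ∧ Function.RightInverse Ginv (Gmap U μ) ∧
      ContDiff ℝ 1 Ginv ∧ ∃ K : NNReal, LipschitzWith K Ginv :=
  stmt3_general N hN U lam μ eps hlam hμ hsmooth heps hRRA hspecial
end

section
/- Let (Ω,F,ℙ) be a probability space, Z a strictly positive random variable with E[Z] = 1, U a utility function satisfying the standard conditions, Ũ its conjugate, and L a strictly positive random variable with E[Z·L] < ∞. For x > 0 set C(x) = {g : Ω → [0,∞) measurable : E[Z·g] ≤ x} and u(x) = sup_{g ∈ C(x)} E[U(g/L)]. Then for every y > 0 the negative part Ũ⁻(y·L·Z) is ℙ-integrable and E[Ũ(y·L·Z)] = sup_{x>0} [u(x) − x·y] (both sides possibly equal to +∞). -/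
/-!
Fenchel's inequality `U(g/L) ≤ Ũ(yLZ) + y·Z·g` integrates, for `g ∈ C(x)`, to
`u(x) - x·y ≤ E[Ũ(yLZ)]`; the negative part of `Ũ(yLZ)` is integrable because
`Ũ(yLZ) ≥ U(1) - yLZ`.

Conversely, `Ũ(q)` is the supremum of `U(r) - r·q` over a dense sequence `(r_k)` of positive
reals. Choosing for each `ω` the best of `r_0, …, r_n` yields claims `g_n = L·r_{k_n(ω)}`, bounded
by a multiple of `L` and hence in `C(E[Z·g_n])`, such that `U(g_n/L) - y·Z·g_n` increases to
`Ũ(yLZ)`. Monotone convergence, with the integrable minorant `U(r_0) - r_0·yLZ`, gives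
`E[Ũ(yLZ)] ≤ sup_x [u(x) - x·y]`.
-/

open MeasureTheory

/-- Generalized expectation `E[W] = E[W⁺] − E[W⁻]` valued in `EReal`, with the
convention that it equals `⊥` when both parts are infinite. -/
noncomputable def eExp {Ω : Type*} [MeasurableSpace Ω] (P : Measure Ω) (W : Ω → ℝ) : EReal :=
  (∫⁻ ω, ENNReal.ofReal (W ω) ∂P).toEReal - (∫⁻ ω, ENNReal.ofReal (-(W ω)) ∂P).toEReal

/-- The conjugate function `Ũ(y) = sup_{x>0} [U(x) − x·y]`. -/
noncomputable def conj (U : ℝ → ℝ) (y : ℝ) : ℝ := sSup ((fun x => U x - x * y) '' Set.Ioi 0)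

/-- The class `C(x)` of (strictly positive) claims affordable from initial wealth `x`:
`g ≥ 0` measurable with `E[Z·g] ≤ x`. -/
def inC {Ω : Type*} [MeasurableSpace Ω] (P : Measure Ω) (Z : Ω → ℝ) (x : ℝ) (g : Ω → ℝ) : Prop :=
  Measurable g ∧ (∀ ω, 0 < g ω) ∧
    ∫⁻ ω, ENNReal.ofReal (Z ω * g ω) ∂P ≤ ENNReal.ofReal x

/-- The primal value function `u(x) = sup_{g ∈ C(x)} E[U(g/L)]`, valued in `EReal`. -/
noncomputable def uval {Ω : Type*} [MeasurableSpace Ω] (P : Measure Ω) (Z : Ω → ℝ)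
    (U : ℝ → ℝ) (L : Ω → ℝ) (x : ℝ) : EReal :=
  ⨆ g : {g : Ω → ℝ // inC P Z x g}, eExp P (fun ω => U (g.1 ω / L ω))

open Set Filter Topology
open scoped ENNReal

section GeneralizedExpectation

variable {Ω : Type*} [MeasurableSpace Ω] {P : Measure Ω} {f g h : Ω → ℝ}

lemma lintegral_ofReal_neg_lt_top_of_le (hg : Integrable g P) (hgh : ∀ ω, g ω ≤ h ω) :
    ∫⁻ ω, ENNReal.ofReal (-h ω) ∂P < ∞ :=
  (lintegral_mono fun ω => ENNReal.ofReal_le_ofReal (neg_le_neg (hgh ω))).trans_lt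
    hg.neg.lintegral_lt_top

lemma integrable_max_neg_zero_of_le (hf : AEStronglyMeasurable f P) (hg : Integrable g P)
    (hgf : ∀ ω, g ω ≤ f ω) : Integrable (fun ω => max (-f ω) 0) P :=
  hg.neg.pos_part.mono' (hf.neg.sup aestronglyMeasurable_const) <| ae_of_all _ fun ω => by
    rw [Real.norm_of_nonneg (le_max_right _ _)]
    exact max_le_max (neg_le_neg (hgf ω)) le_rfl

lemma eExp_of_integrable (hf : Integrable f P) : eExp P f = ((∫ ω, f ω ∂P : ℝ) : EReal) := by
  have hneg : ∫⁻ ω, ENNReal.ofReal (-f ω) ∂P < ∞ := hf.neg.lintegral_lt_top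
  rw [eExp, integral_eq_lintegral_pos_part_sub_lintegral_neg_part hf, EReal.coe_sub,
    EReal.coe_ennreal_toReal hf.lintegral_lt_top.ne, EReal.coe_ennreal_toReal hneg.ne]

lemma eExp_mono (hfg : ∀ ω, f ω ≤ g ω) : eExp P f ≤ eExp P g :=
  EReal.sub_le_sub
    (EReal.coe_ennreal_le_coe_ennreal_iff.2 <|
      lintegral_mono fun ω => ENNReal.ofReal_le_ofReal (hfg ω))
    (EReal.coe_ennreal_le_coe_ennreal_iff.2 <|
      lintegral_mono fun ω => ENNReal.ofReal_le_ofReal (neg_le_neg (hfg ω)))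

lemma eExp_eq_lintegral_sub_add_integral (hh : AEMeasurable h P) (hg : Integrable g P)
    (hgh : ∀ ω, g ω ≤ h ω) :
    eExp P h = (∫⁻ ω, ENNReal.ofReal (h ω - g ω) ∂P : EReal) + ((∫ ω, g ω ∂P : ℝ) : EReal) := by
  have hsub : AEMeasurable (fun ω => h ω - g ω) P := hh.sub hg.aemeasurable
  by_cases htop : ∫⁻ ω, ENNReal.ofReal (h ω - g ω) ∂P = ∞
  · have hsplit : ∫⁻ ω, ENNReal.ofReal (h ω - g ω) ∂P ≤
        ∫⁻ ω, ENNReal.ofReal (h ω) ∂P + ∫⁻ ω, ENNReal.ofReal (-g ω) ∂P := by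
      have hm : AEMeasurable (fun ω => ENNReal.ofReal (-g ω)) P :=
        hg.aemeasurable.neg.ennreal_ofReal
      rw [← lintegral_add_right' _ hm]
      exact lintegral_mono fun ω => (ENNReal.ofReal_le_ofReal (by linarith)).trans
        ENNReal.ofReal_add_le
    have hpos : ∫⁻ ω, ENNReal.ofReal (h ω) ∂P = ∞ := by
      by_contra hfin
      exact htop.not_lt <| hsplit.trans_lt <|
        ENNReal.add_lt_top.2 ⟨lt_top_iff_ne_top.2 hfin, hg.neg.lintegral_lt_top⟩
    rw [eExp, hpos, htop, ← EReal.coe_ennreal_toReal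
      (lintegral_ofReal_neg_lt_top_of_le hg hgh).ne]
    simp
  · have hint : Integrable (fun ω => h ω - g ω) P :=
      (lintegral_ofReal_ne_top_iff_integrable hsub.aestronglyMeasurable
        (ae_of_all _ fun ω => sub_nonneg.2 (hgh ω))).1 htop
    have hhint : Integrable h P := (hint.add hg).congr (ae_of_all _ fun ω => by simp)
    rw [eExp_of_integrable hhint, ← EReal.coe_ennreal_toReal htop, ← EReal.coe_add,
      ← integral_eq_lintegral_of_nonneg_ae (ae_of_all _ fun ω => sub_nonneg.2 (hgh ω))
        hsub.aestronglyMeasurable, integral_sub hhint hg, sub_add_cancel]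

lemma eExp_add_integral (hh : AEMeasurable h P) (hg : Integrable g P) (hgh : ∀ ω, g ω ≤ h ω)
    (hf : Integrable f P) :
    eExp P (fun ω => h ω + f ω) = eExp P h + ((∫ ω, f ω ∂P : ℝ) : EReal) := by
  rw [eExp_eq_lintegral_sub_add_integral (h := fun ω => h ω + f ω) (g := fun ω => g ω + f ω)
      (hh.add hf.aemeasurable) (hg.add hf) fun ω => by linarith [hgh ω],
    eExp_eq_lintegral_sub_add_integral hh hg hgh, integral_add hg hf, EReal.coe_add, add_assoc]
  simp

lemma tendsto_eExp_of_monotone {f : ℕ → Ω → ℝ} {F : Ω → ℝ} (hf : ∀ n, Measurable (f n))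
    (hmono : ∀ ω, Monotone fun n => f n ω) (h0 : Integrable (f 0) P)
    (hF : ∀ ω, Tendsto (fun n => f n ω) atTop (𝓝 (F ω))) :
    Tendsto (fun n => eExp P (f n)) atTop (𝓝 (eExp P F)) := by
  have hle : ∀ n ω, f 0 ω ≤ f n ω := fun n ω => hmono ω (Nat.zero_le n)
  have hFm : Measurable F := measurable_of_tendsto_metrizable hf (tendsto_pi_nhds.2 hF)
  have hlin : Tendsto (fun n => ∫⁻ ω, ENNReal.ofReal (f n ω - f 0 ω) ∂P) atTop
      (𝓝 (∫⁻ ω, ENNReal.ofReal (F ω - f 0 ω) ∂P)) :=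
    lintegral_tendsto_of_tendsto_of_monotone
      (fun n => ((hf n).sub (hf 0)).ennreal_ofReal.aemeasurable)
      (ae_of_all _ fun ω _ _ hnm => ENNReal.ofReal_le_ofReal (sub_le_sub_right (hmono ω hnm) _))
      (ae_of_all _ fun ω => (ENNReal.continuous_ofReal.tendsto _).comp ((hF ω).sub_const _))
  simp_rw [eExp_eq_lintegral_sub_add_integral (hf _).aemeasurable h0 (hle _),
    eExp_eq_lintegral_sub_add_integral hFm.aemeasurable h0
      fun ω => ge_of_tendsto' (hF ω) fun n => hle n ω]
  exact (EReal.continuousAt_add (Or.inr (EReal.coe_ne_bot _))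
    (Or.inr (EReal.coe_ne_top _))).tendsto.comp
    ((EReal.tendsto_coe_ennreal.2 hlin).prodMk_nhds tendsto_const_nhds)

end GeneralizedExpectation

theorem ConcaveOn.le_add_deriv_mul_sub {S : Set ℝ} {f : ℝ → ℝ} {a x : ℝ}
    (hf : ConcaveOn ℝ S f) (ha : a ∈ S) (hx : x ∈ S) (hfa : DifferentiableAt ℝ f a) :
    f x ≤ f a + deriv f a * (x - a) := by
  rcases lt_trichotomy x a with hxa | rfl | hax
  · have h := hf.deriv_le_slope hx ha hxa hfa
    rw [slope_def_field, le_div_iff₀ (sub_pos.2 hxa)] at h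
    linarith
  · simp
  · have h := hf.slope_le_deriv ha hx hax hfa
    rw [slope_def_field, div_le_iff₀ (sub_pos.2 hax)] at h
    linarith

section Conjugate

variable {U : ℝ → ℝ}

/-- Once `U'(a) ≤ q`, the tangent line at `a` bounds `U(x) - x q` by `U(a) - a U'(a)`. -/
lemma bddAbove_conj (hU : ConcaveOn ℝ (Ioi 0) U) (hUd : DifferentiableOn ℝ U (Ioi 0))
    (hU' : Tendsto (deriv U) atTop (𝓝 0)) {q : ℝ} (hq : 0 < q) :
    BddAbove ((fun x => U x - x * q) '' Ioi 0) := by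
  obtain ⟨a, hUa, ha⟩ := ((hU'.eventually_lt_const hq).and (eventually_gt_atTop 0)).exists
  refine ⟨U a - a * deriv U a, ?_⟩
  rintro _ ⟨x, hx, rfl⟩
  have htan := hU.le_add_deriv_mul_sub ha hx (hUd.differentiableAt (Ioi_mem_nhds ha))
  nlinarith [mem_Ioi.1 hx]

lemma sub_mul_le_conj (hU : ConcaveOn ℝ (Ioi 0) U) (hUd : DifferentiableOn ℝ U (Ioi 0))
    (hU' : Tendsto (deriv U) atTop (𝓝 0)) {q t : ℝ} (hq : 0 < q) (ht : 0 < t) :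
    U t - t * q ≤ conj U q :=
  le_csSup (bddAbove_conj hU hUd hU' hq) (mem_image_of_mem _ ht)

lemma apply_one_sub_le_conj (hU : ConcaveOn ℝ (Ioi 0) U) (hUd : DifferentiableOn ℝ U (Ioi 0))
    (hU' : Tendsto (deriv U) atTop (𝓝 0)) {q : ℝ} (hq : 0 < q) : U 1 - q ≤ conj U q := by
  simpa using sub_mul_le_conj hU hUd hU' hq one_pos

noncomputable def densePosSeq (n : ℕ) : ℝ := TopologicalSpace.denseSeq (Ioi (0 : ℝ)) n

lemma densePosSeq_pos (n : ℕ) : 0 < densePosSeq n :=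
  (TopologicalSpace.denseSeq (Ioi (0 : ℝ)) n).2

lemma conj_eq_iSup_densePosSeq (hU : ContinuousOn U (Ioi 0)) (q : ℝ) :
    conj U q = ⨆ n, U (densePosSeq n) - densePosSeq n * q := by
  have hcont : Continuous fun x : Ioi (0 : ℝ) => U x - x * q :=
    hU.domRestrict.sub (continuous_subtype_val.mul continuous_const)
  rw [conj, sSup_image', ← (TopologicalSpace.denseRange_denseSeq _).ciSup' hcont,
    iSup_range' (fun x : Ioi (0 : ℝ) => U x - x * q)]
  rfl

lemma measurable_conj_comp {Ω : Type*} [MeasurableSpace Ω] (hU : ContinuousOn U (Ioi 0))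
    {W : Ω → ℝ} (hW : Measurable W) : Measurable fun ω => conj U (W ω) := by
  simp_rw [conj_eq_iSup_densePosSeq hU]
  exact Measurable.iSup fun n => measurable_const.sub (hW.const_mul _)

end Conjugate

section RunningArgmax

variable {β α : Type*}

section LinearOrder

variable [LinearOrder α]

/-- The first index `k ≤ n` at which `φ k q` is maximal. -/
noncomputable def argmaxUpTo (φ : ℕ → β → α) : ℕ → β → ℕ
  | 0, _ => 0
  | n + 1, q => if φ (argmaxUpTo φ n q) q < φ (n + 1) q then n + 1 else argmaxUpTo φ n q

variable {φ : ℕ → β → α}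

lemma argmaxUpTo_le (n : ℕ) (q : β) : argmaxUpTo φ n q ≤ n := by
  induction n with
  | zero => rfl
  | succ n ih =>
    rw [argmaxUpTo]
    split_ifs <;> omega

lemma le_apply_argmaxUpTo {k n : ℕ} (hkn : k ≤ n) (q : β) : φ k q ≤ φ (argmaxUpTo φ n q) q := by
  induction n with
  | zero => rw [Nat.le_zero.1 hkn]; rfl
  | succ n ih =>
    rw [argmaxUpTo]
    split_ifs with h
    · rcases Nat.of_le_succ hkn with hk | rfl
      exacts [(ih hk).trans h.le, le_rfl]
    · rcases Nat.of_le_succ hkn with hk | rfl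
      exacts [ih hk, not_lt.1 h]

lemma monotone_apply_argmaxUpTo (q : β) : Monotone fun n => φ (argmaxUpTo φ n q) q :=
  fun _ _ hnm => le_apply_argmaxUpTo ((argmaxUpTo_le _ q).trans hnm) q

end LinearOrder

lemma tendsto_apply_argmaxUpTo [ConditionallyCompleteLinearOrder α] [TopologicalSpace α]
    [OrderTopology α] {φ : ℕ → β → α} {q : β} (hφ : BddAbove (range fun k => φ k q)) :
    Tendsto (fun n => φ (argmaxUpTo φ n q) q) atTop (𝓝 (⨆ k, φ k q)) := by
  have hle : ∀ n, φ (argmaxUpTo φ n q) q ≤ ⨆ k, φ k q := fun n => le_ciSup hφ _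
  have hsup : ⨆ n, φ (argmaxUpTo φ n q) q = ⨆ k, φ k q :=
    le_antisymm (ciSup_le hle) <| ciSup_mono ⟨_, forall_mem_range.2 hle⟩
      fun k => le_apply_argmaxUpTo le_rfl q
  exact hsup ▸ tendsto_atTop_ciSup (monotone_apply_argmaxUpTo q) ⟨_, forall_mem_range.2 hle⟩

lemma measurable_argmaxUpTo [MeasurableSpace β] [LinearOrder α] [TopologicalSpace α]
    [OrderClosedTopology α] [SecondCountableTopology α] [MeasurableSpace α]
    [OpensMeasurableSpace α] {φ : ℕ → β → α} (hφ : ∀ k, Measurable (φ k)) (n : ℕ) :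
    Measurable (argmaxUpTo φ n) := by
  induction n with
  | zero => exact measurable_const
  | succ n ih =>
    have hval : Measurable fun q => φ (argmaxUpTo φ n q) q :=
      (measurable_from_prod_countable_left (f := fun p : β × ℕ => φ p.2 p.1)
        fun k => hφ k).comp (measurable_id.prodMk ih)
    exact Measurable.ite (measurableSet_lt hval (hφ (n + 1))) measurable_const ih

end RunningArgmax

section BestCandidate

variable {U : ℝ → ℝ}

/-- The point among `densePosSeq 0, …, densePosSeq n` that is best in the supremum defining
`conj U q`. -/
noncomputable def bestCandidate (U : ℝ → ℝ) (n : ℕ) (q : ℝ) : ℝ :=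
  densePosSeq (argmaxUpTo (fun j q => U (densePosSeq j) - densePosSeq j * q) n q)

lemma bestCandidate_pos (n : ℕ) (q : ℝ) : 0 < bestCandidate U n q :=
  densePosSeq_pos _

lemma bestCandidate_le_sum (n : ℕ) (q : ℝ) :
    bestCandidate U n q ≤ ∑ j ∈ Finset.range (n + 1), densePosSeq j :=
  Finset.single_le_sum (fun j _ => (densePosSeq_pos j).le)
    (Finset.mem_range.2 (Nat.lt_succ_of_le (argmaxUpTo_le n q)))

lemma measurable_bestCandidate (n : ℕ) :
    Measurable (bestCandidate U n) ∧ Measurable fun q => U (bestCandidate U n q) := by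
  have hk := measurable_argmaxUpTo (φ := fun j q => U (densePosSeq j) - densePosSeq j * q)
    (fun _ => measurable_const.sub (measurable_id.const_mul _)) n
  exact ⟨measurable_from_nat.comp hk,
    (measurable_from_nat (f := fun j => U (densePosSeq j))).comp hk⟩

lemma monotone_bestCandidate (q : ℝ) :
    Monotone fun n => U (bestCandidate U n q) - bestCandidate U n q * q :=
  monotone_apply_argmaxUpTo (φ := fun j q => U (densePosSeq j) - densePosSeq j * q) q

lemma tendsto_bestCandidate (hU : ConcaveOn ℝ (Ioi 0) U) (hUd : DifferentiableOn ℝ U (Ioi 0))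
    (hU' : Tendsto (deriv U) atTop (𝓝 0)) {q : ℝ} (hq : 0 < q) :
    Tendsto (fun n => U (bestCandidate U n q) - bestCandidate U n q * q) atTop
      (𝓝 (conj U q)) := by
  rw [conj_eq_iSup_densePosSeq hUd.continuousOn]
  exact tendsto_apply_argmaxUpTo (φ := fun j q => U (densePosSeq j) - densePosSeq j * q) <|
    (bddAbove_conj hU hUd hU' hq).mono <| range_subset_iff.2 fun j =>
      mem_image_of_mem _ (mem_Ioi.2 (densePosSeq_pos j))

end BestCandidate

section Duality

variable {Ω : Type*} [MeasurableSpace Ω] {P : Measure Ω} {Z L : Ω → ℝ} {U : ℝ → ℝ} {y : ℝ}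

lemma uval_sub_le_eExp_conj [IsFiniteMeasure P] (hZm : Measurable Z) (hZ : ∀ ω, 0 < Z ω)
    (hL : ∀ ω, 0 < L ω) (hU : ConcaveOn ℝ (Ioi 0) U) (hUd : DifferentiableOn ℝ U (Ioi 0))
    (hU' : Tendsto (deriv U) atTop (𝓝 0)) (hy : 0 < y)
    (hB : Measurable fun ω => conj U (y * L ω * Z ω))
    (hW : Integrable (fun ω => y * L ω * Z ω) P) {x : ℝ} (hx : 0 ≤ x) :
    uval P Z U L x - ((x * y : ℝ) : EReal) ≤ eExp P (fun ω => conj U (y * L ω * Z ω)) := by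
  rw [EReal.sub_le_iff_le_add (Or.inl (EReal.coe_ne_bot _)) (Or.inl (EReal.coe_ne_top _)), uval]
  have hWpos : ∀ ω, 0 < y * L ω * Z ω := fun ω => mul_pos (mul_pos hy (hL ω)) (hZ ω)
  refine iSup_le fun ⟨g, hgm, hg, hgx⟩ => ?_
  have hZg : Integrable (fun ω => Z ω * g ω) P :=
    (lintegral_ofReal_ne_top_iff_integrable (hZm.mul hgm).aestronglyMeasurable
      (ae_of_all _ fun ω => (mul_pos (hZ ω) (hg ω)).le)).1 (ne_top_of_le_ne_top
        ENNReal.ofReal_ne_top hgx)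
  have hfenchel : ∀ ω, U (g ω / L ω) ≤ conj U (y * L ω * Z ω) + y * (Z ω * g ω) := fun ω => by
    have h := sub_mul_le_conj hU hUd hU' (hWpos ω) (div_pos (hg ω) (hL ω))
    have hprice : g ω / L ω * (y * L ω * Z ω) = y * (Z ω * g ω) := by
      field_simp [(hL ω).ne']
    linarith
  have hcost : ∫ ω, y * (Z ω * g ω) ∂P ≤ x * y := by
    rw [integral_const_mul, mul_comm]
    refine mul_le_mul_of_nonneg_right ?_ hy.le
    rw [← ENNReal.ofReal_le_ofReal_iff hx, ofReal_integral_eq_lintegral_ofReal hZg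
      (ae_of_all _ fun ω => (mul_pos (hZ ω) (hg ω)).le)]
    exact hgx
  calc eExp P (fun ω => U (g ω / L ω))
      ≤ eExp P (fun ω => conj U (y * L ω * Z ω) + y * (Z ω * g ω)) := eExp_mono hfenchel
    _ = eExp P (fun ω => conj U (y * L ω * Z ω)) + ((∫ ω, y * (Z ω * g ω) ∂P : ℝ) : EReal) :=
      eExp_add_integral hB.aemeasurable ((integrable_const (U 1)).sub hW)
        (fun ω => apply_one_sub_le_conj hU hUd hU' (hWpos ω))
        (hZg.const_mul y)
    _ ≤ _ := add_le_add_right (EReal.coe_le_coe_iff.2 hcost) _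

lemma eExp_sub_le_iSup_uval [IsProbabilityMeasure P] {g m : Ω → ℝ} (hZ : ∀ ω, 0 < Z ω)
    (hgm : Measurable g) (hg : ∀ ω, 0 < g ω) (hZg : Integrable (fun ω => Z ω * g ω) P)
    (hUg : Measurable fun ω => U (g ω / L ω)) (hm : Integrable m P)
    (hmU : ∀ ω, m ω ≤ U (g ω / L ω) - y * (Z ω * g ω)) :
    eExp P (fun ω => U (g ω / L ω) - y * (Z ω * g ω)) ≤
      ⨆ x : {x : ℝ // 0 < x}, (uval P Z U L x.1 - ((x.1 * y : ℝ) : EReal)) := by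
  set x := ∫ ω, Z ω * g ω ∂P
  have hZg0 : ∀ ω, 0 ≤ Z ω * g ω := fun ω => (mul_pos (hZ ω) (hg ω)).le
  have hx : 0 < x := by
    rw [integral_pos_iff_support_of_nonneg hZg0 hZg, Function.support_eq_univ
      fun ω => (mul_pos (hZ ω) (hg ω)).ne', measure_univ]
    exact one_pos
  have hgC : inC P Z x g :=
    ⟨hgm, hg, (ofReal_integral_eq_lintegral_ofReal hZg (ae_of_all _ hZg0)).ge⟩
  have hsplit : eExp P (fun ω => U (g ω / L ω)) =
      eExp P (fun ω => U (g ω / L ω) - y * (Z ω * g ω)) + ((x * y : ℝ) : EReal) := by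
    rw [mul_comm, ← integral_const_mul, ← eExp_add_integral
      (h := fun ω => U (g ω / L ω) - y * (Z ω * g ω))
      (hUg.aemeasurable.sub (hZg.const_mul y).aemeasurable) hm hmU (hZg.const_mul y)]
    simp
  calc eExp P (fun ω => U (g ω / L ω) - y * (Z ω * g ω))
      = eExp P (fun ω => U (g ω / L ω)) - ((x * y : ℝ) : EReal) := by
        rw [hsplit, EReal.add_sub_cancel_right]
    _ ≤ uval P Z U L x - ((x * y : ℝ) : EReal) :=
        EReal.sub_le_sub (le_iSup (fun g : {g // inC P Z x g} =>
          eExp P (fun ω => U (g.1 ω / L ω))) ⟨g, hgC⟩) le_rfl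
    _ ≤ _ := le_iSup (fun x : {x : ℝ // 0 < x} =>
          uval P Z U L x.1 - ((x.1 * y : ℝ) : EReal)) ⟨x, hx⟩

lemma eExp_conj_le_iSup_uval [IsProbabilityMeasure P] (hZm : Measurable Z) (hZ : ∀ ω, 0 < Z ω)
    (hLm : Measurable L) (hL : ∀ ω, 0 < L ω) (hZL : Integrable (fun ω => Z ω * L ω) P)
    (hU : ConcaveOn ℝ (Ioi 0) U) (hUd : DifferentiableOn ℝ U (Ioi 0))
    (hU' : Tendsto (deriv U) atTop (𝓝 0)) (hy : 0 < y) :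
    eExp P (fun ω => conj U (y * L ω * Z ω)) ≤
      ⨆ x : {x : ℝ // 0 < x}, (uval P Z U L x.1 - ((x.1 * y : ℝ) : EReal)) := by
  set W := fun ω => y * L ω * Z ω
  set c : ℕ → Ω → ℝ := fun n ω => bestCandidate U n (W ω)
  have hWm : Measurable W := (measurable_const.mul hLm).mul hZm
  have hW : Integrable W P := (hZL.const_mul y).congr (ae_of_all _ fun ω => by simp only [W]; ring)
  have hc n : Measurable (c n) := (measurable_bestCandidate n).1.comp hWm
  have hUc n : Measurable fun ω => U (c n ω) := (measurable_bestCandidate n).2.comp hWm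
  have h0 : Integrable (fun ω => U (c 0 ω) - c 0 ω * W ω) P :=
    (integrable_const (U (densePosSeq 0))).sub (hW.const_mul (densePosSeq 0))
  refine le_of_tendsto' (tendsto_eExp_of_monotone (f := fun n ω => U (c n ω) - c n ω * W ω)
    (fun n => (hUc n).sub ((hc n).mul hWm))
    (fun ω => monotone_bestCandidate (W ω)) h0
    (fun ω => tendsto_bestCandidate hU hUd hU' (mul_pos (mul_pos hy (hL ω)) (hZ ω))))
    fun n => ?_
  have hZg : Integrable (fun ω => Z ω * (L ω * c n ω)) P :=
    (hZL.mul_bdd (hc n).aestronglyMeasurable (ae_of_all _ fun ω => by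
      rw [Real.norm_of_nonneg (bestCandidate_pos n _).le]
      exact bestCandidate_le_sum n _)).congr (ae_of_all _ fun ω => mul_assoc _ _ _)
  have hgL : ∀ ω, L ω * c n ω / L ω = c n ω := fun ω => mul_div_cancel_left₀ _ (hL ω).ne'
  have hf : ∀ ω, U (c n ω) - c n ω * W ω =
      U (L ω * c n ω / L ω) - y * (Z ω * (L ω * c n ω)) := fun ω => by
    rw [hgL]; ring
  simp_rw [hf]
  refine eExp_sub_le_iSup_uval hZ (hLm.mul (hc n)) (fun ω => mul_pos (hL ω) (bestCandidate_pos n _))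
    hZg (by simpa only [hgL] using hUc n) h0 fun ω => ?_
  rw [← hf]
  exact monotone_bestCandidate (W ω) (Nat.zero_le n)

end Duality

theorem stmt11_general {Ω : Type*} [MeasurableSpace Ω] (P : Measure Ω) [IsProbabilityMeasure P]
    (Z : Ω → ℝ) (hZmeas : Measurable Z) (hZpos : ∀ ω, 0 < Z ω)
    (U : ℝ → ℝ)
    (hconc : StrictConcaveOn ℝ (Set.Ioi 0) U)
    (hsmooth : ContDiffOn ℝ 1 U (Set.Ioi 0))
    (hinadaInf : Filter.Tendsto (deriv U) Filter.atTop (nhds 0))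
    (L : Ω → ℝ) (hLmeas : Measurable L) (hLpos : ∀ ω, 0 < L ω)
    (hLint : ∫⁻ ω, ENNReal.ofReal (Z ω * L ω) ∂P < ⊤)
    (y : ℝ) (hy : 0 < y) :
    Integrable (fun ω => max (-(conj U (y * L ω * Z ω))) 0) P ∧
    eExp P (fun ω => conj U (y * L ω * Z ω)) =
      ⨆ x : {x : ℝ // 0 < x}, (uval P Z U L x.1 - ((x.1 * y : ℝ) : EReal)) := by
  have hU := hconc.concaveOn
  have hUd := hsmooth.differentiableOn one_ne_zero
  have hZL : Integrable (fun ω => Z ω * L ω) P :=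
    (lintegral_ofReal_ne_top_iff_integrable (hZmeas.mul hLmeas).aestronglyMeasurable
      (ae_of_all _ fun ω => (mul_pos (hZpos ω) (hLpos ω)).le)).1 hLint.ne
  have hW : Integrable (fun ω => y * L ω * Z ω) P :=
    (hZL.const_mul y).congr (ae_of_all _ fun ω => by ring)
  have hB : Measurable fun ω => conj U (y * L ω * Z ω) :=
    measurable_conj_comp hUd.continuousOn ((measurable_const.mul hLmeas).mul hZmeas)
  have hWpos : ∀ ω, 0 < y * L ω * Z ω := fun ω => mul_pos (mul_pos hy (hLpos ω)) (hZpos ω)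
  refine ⟨integrable_max_neg_zero_of_le hB.aestronglyMeasurable
      ((integrable_const (U 1)).sub hW) fun ω => apply_one_sub_le_conj hU hUd hinadaInf (hWpos ω),
    le_antisymm ?_ (iSup_le fun x => ?_)⟩
  · exact eExp_conj_le_iSup_uval hZmeas hZpos hLmeas hLpos hZL hU hUd hinadaInf hy
  · exact uval_sub_le_eExp_conj hZmeas hZpos hLpos hU hUd hinadaInf hy hB hW x.2.le

theorem stmt11 {Ω : Type*} [MeasurableSpace Ω] (P : Measure Ω) [IsProbabilityMeasure P]
    (Z : Ω → ℝ) (hZmeas : Measurable Z) (hZpos : ∀ ω, 0 < Z ω)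
    (hZint : Integrable Z P) (hZ1 : ∫ ω, Z ω ∂P = 1)
    (U : ℝ → ℝ)
    (hmono : StrictMonoOn U (Set.Ioi 0))
    (hconc : StrictConcaveOn ℝ (Set.Ioi 0) U)
    (hsmooth : ContDiffOn ℝ 1 U (Set.Ioi 0))
    (hinada0 : Filter.Tendsto (deriv U) (nhdsWithin 0 (Set.Ioi 0)) Filter.atTop)
    (hinadaInf : Filter.Tendsto (deriv U) Filter.atTop (nhds 0))
    (L : Ω → ℝ) (hLmeas : Measurable L) (hLpos : ∀ ω, 0 < L ω)
    (hLint : ∫⁻ ω, ENNReal.ofReal (Z ω * L ω) ∂P < ⊤)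
    (y : ℝ) (hy : 0 < y) :
    Integrable (fun ω => max (-(conj U (y * L ω * Z ω))) 0) P ∧
    eExp P (fun ω => conj U (y * L ω * Z ω)) =
      ⨆ x : {x : ℝ // 0 < x}, (uval P Z U L x.1 - ((x.1 * y : ℝ) : EReal)) :=
  stmt11_general P Z hZmeas hZpos U hconc hsmooth hinadaInf L hLmeas hLpos hLint y hy
end
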